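/- arXiv:1406.1717 — 9 statements merged into one kernel-verified Lean document; each statement's English description precedes it below -/
import Mathlib

section
/- Let α be a linear order, h a natural number, t a natural number with t ≤ h, and Z a multiset over α with |Z| = h+1. Let M be a multiset over α of cardinality 2h+1 obtained from Z by adding h−t elements each of which is strictly less than every element of Z and t elements each of which is strictly greater than every element of Z. Then the element of rank h of M equals the element of rank t of Z. -/
namespace Multiset

variable {α : Type*} (r : α → α → Prop) [DecidableRel r] [IsTrans α r] [Std.Antisymm r]
  [Std.Total r]

theorem sort_add_of_forall_rel {s t : Multiset α} (hst : ∀ a ∈ s, ∀ b ∈ t, r a b) :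
    sort (s + t) r = sort s r ++ sort t r := by
  have hsorted : (sort s r ++ sort t r).Pairwise r :=
    List.pairwise_append.2 ⟨pairwise_sort s r, pairwise_sort t r,
      fun a ha b hb => hst a ((mem_sort r).1 ha) b ((mem_sort r).1 hb)⟩
  conv_lhs => rw [← sort_eq s r, ← sort_eq t r, coe_add, coe_sort]
  exact List.mergeSort_eq_self _ hsorted

end Multiset

theorem median_of_padded_block_general {α : Type*} [LinearOrder α] (h t : ℕ) (ht : t ≤ h)
    (Z N P : Multiset α) (hZ : Multiset.card Z = h + 1)
    (hN : Multiset.card N = h - t)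
    (hNlt : ∀ x ∈ N, ∀ z ∈ Z, x < z) (hPgt : ∀ x ∈ P, ∀ z ∈ Z, z < x) :
    (Multiset.sort (N + Z + P) (· ≤ ·))[h]? = (Multiset.sort Z (· ≤ ·))[t]? := by
  -- A witness in `Z` separates `N` from `P`.
  obtain ⟨z, hz⟩ : ∃ z, z ∈ Z := Multiset.card_pos_iff_exists_mem.1 (by omega)
  have hNZ_le_P : ∀ x ∈ N + Z, ∀ y ∈ P, x ≤ y := by
    intro x hx y hy
    rcases Multiset.mem_add.1 hx with hxN | hxZ
    · exact ((hNlt x hxN z hz).trans (hPgt y hy z hz)).le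
    · exact (hPgt y hy x hxZ).le
  rw [Multiset.sort_add_of_forall_rel _ hNZ_le_P,
    Multiset.sort_add_of_forall_rel _ fun x hx y hy => (hNlt x hx y hy).le,
    List.append_assoc, List.getElem?_append_right (by simp [hN]),
    List.getElem?_append_left (by simp [hN, hZ])]
  congr 1
  simp only [Multiset.length_sort, hN]
  omega

/-- Let `Z` be a multiset of cardinality `h+1` over a linear order.
Form `M = N + Z + P` where `N` consists of `h - t` elements each strictly smaller than
every element of `Z`, and `P` consists of `t` elements each strictly larger than every
element of `Z` (so `|M| = 2h+1`).  Then the element of rank `h` of `M` (its median)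
equals the element of rank `t` of `Z`. -/
theorem median_of_padded_block {α : Type*} [LinearOrder α] (h t : ℕ) (ht : t ≤ h)
    (Z N P : Multiset α) (hZ : Multiset.card Z = h + 1)
    (hN : Multiset.card N = h - t) (hP : Multiset.card P = t)
    (hNlt : ∀ x ∈ N, ∀ z ∈ Z, x < z) (hPgt : ∀ x ∈ P, ∀ z ∈ Z, z < x) :
    (Multiset.sort (N + Z + P) (· ≤ ·))[h]? = (Multiset.sort Z (· ≤ ·))[t]? :=
  median_of_padded_block_general h t ht Z N P hZ hN hNlt hPgt
end

section
/- Let α be a linear order, h a natural number, and z : Fin (h+1) → α. Define the vector x of length 3h+1 over WithBot (WithTop α) by: x_i = ⊥ for 0 ≤ i < h, x_{h+j} = the coercion of z_j for 0 ≤ j ≤ h, and x_i = ⊤ for 2h < i ≤ 3h. Then the median filter of x with window size 2h+1 is the vector (y_0, …, y_h) where y_t is the coercion of the element of rank t of the multiset {z_0, …, z_h}; in other words, the output of the median filter is exactly the sorted (nondecreasing) rearrangement of the block z. -/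
/-! The window starting at `t` holds `h - t` copies of `⊥`, the whole block and `t` copies
of `⊤`. Sorting it moves the padding to the two ends, so its entry of rank `h = (h - t) + t`
is the entry of rank `t` of the sorted block. -/

namespace List

theorem take_drop_replicate_append_replicate {β : Type*} (a b : β) (l : List β) {p q t : ℕ}
    (htp : t ≤ p) (htq : t ≤ q) :
    ((replicate p a ++ l ++ replicate q b).drop t).take (p + l.length) =
      replicate (p - t) a ++ l ++ replicate t b := by
  have hlen : p + l.length = (replicate (p - t) a ++ l).length + t := by simp; omega
  rw [append_assoc, drop_append_of_le_length (by simpa), drop_replicate, ← append_assoc, hlen,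
    take_length_add_append, take_replicate, min_eq_left htq]

theorem getElem?_replicate_append_append_add {β : Type*} (a : β) (l₁ l₂ : List β) {m i : ℕ}
    (hi : i < l₁.length) : (replicate m a ++ l₁ ++ l₂)[m + i]? = l₁[i]? := by
  rw [append_assoc, getElem?_append_right (by simp), length_replicate, Nat.add_sub_cancel_left,
    getElem?_append_left hi]

end List

namespace Multiset

theorem sort_replicate_bot_append_replicate_top {β : Type*} [LinearOrder β] [OrderBot β]
    [OrderTop β] (m n : ℕ) (l : List β) :
    sort (↑(List.replicate m (⊥ : β) ++ l ++ List.replicate n (⊤ : β)) : Multiset β) =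
      List.replicate m ⊥ ++ sort (l : Multiset β) ++ List.replicate n ⊤ := by
  set padded := List.replicate m (⊥ : β) ++ sort (l : Multiset β) ++ List.replicate n ⊤
  have hperm : padded.Perm (List.replicate m ⊥ ++ l ++ List.replicate n ⊤) :=
    ((List.mergeSort_perm l _).append_left _).append_right _
  have hsorted : padded.Pairwise (· ≤ ·) := by
    simp only [padded, List.pairwise_append, List.pairwise_replicate, le_refl, or_true,
      pairwise_sort, true_and]
    exact ⟨fun a ha _ _ ↦ (List.eq_of_mem_replicate ha).symm ▸ bot_le,
      fun _ _ b hb ↦ (List.eq_of_mem_replicate hb).symm ▸ le_top⟩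
  rw [← coe_eq_coe.2 hperm, coe_sort]
  exact List.mergeSort_eq_self _ hsorted

end Multiset

/-- Pad the block `z : Fin (h+1) → α` with `h` copies of `⊥` in front and
`h` copies of `⊤` behind, obtaining a vector `x` of length `3h+1` over `WithBot (WithTop α)`.
Then the median filter of `x` with window size `2h+1` (whose output has entries
`y_t` for `0 ≤ t ≤ h`, `y_t` being the element of rank `h` of the window multiset
`{x_t, …, x_{t+2h}}`) is exactly the sorted rearrangement of the block `z`:
`y_t` is the element of rank `t` of the multiset `{z_0, …, z_h}`. -/
theorem median_filter_sorts_single_block {α : Type*} [LinearOrder α] (h : ℕ)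
    (z : Fin (h + 1) → α) :
    ∀ t : ℕ, t ≤ h →
      (Multiset.sort
          (↑((((List.replicate h (⊥ : WithBot (WithTop α))) ++
                (List.ofFn z).map (fun a => ((↑(↑a : WithTop α) : WithBot (WithTop α)))) ++
                List.replicate h (⊤ : WithBot (WithTop α))).drop t).take (2 * h + 1)) :
            Multiset (WithBot (WithTop α))) (· ≤ ·))[h]? =
      ((Multiset.sort (↑(List.ofFn z) : Multiset α) (· ≤ ·))[t]?).map
        (fun a => ((↑(↑a : WithTop α) : WithBot (WithTop α)))) := by
  intro t ht
  -- the double coercion in the statement elaborates through the list and option monads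
  simp only [bind_pure_comp, List.map_eq_map, Option.map_eq_map, List.map_map, Option.map_map,
    Function.comp_def]
  set f : α → WithBot (WithTop α) := fun a ↦ ↑(↑a : WithTop α)
  have hf : ∀ a b : α, a ≤ b ↔ f a ≤ f b := fun _ _ ↦ by simp [f]
  have hwindow : 2 * h + 1 = h + ((List.ofFn z).map f).length := by simp; omega
  have hsorted : (Multiset.sort ↑((List.ofFn z).map f) : List (WithBot (WithTop α))) =
      (Multiset.sort (↑(List.ofFn z) : Multiset α)).map f := by
    rw [← Multiset.map_coe, Multiset.map_sort _ _ _ _ fun a _ b _ ↦ hf a b]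
  have hmedian := List.getElem?_replicate_append_append_add (⊥ : WithBot (WithTop α))
    ((Multiset.sort (↑(List.ofFn z) : Multiset α)).map f) (List.replicate t ⊤) (m := h - t)
    (i := t) (by simp; omega)
  rw [hwindow, List.take_drop_replicate_append_replicate _ _ _ ht ht,
    Multiset.sort_replicate_bot_append_replicate_top, hsorted, ← List.getElem?_map,
    ← hmedian, Nat.sub_add_cancel ht]
end

section
/- Let α be a linear order, h and b natural numbers with b ≥ 1, and for each j < b let z^{(j)} : Fin (h+1) → α be a block of h+1 values. Define the vector x of length b(3h+1) over WithBot (WithTop α) as the concatenation of b segments, where segment j consists of h copies of ⊥, followed by the coercions of z^{(j)}_0, …, z^{(j)}_h, followed by h copies of ⊤. Then the median filter of x with window size 2h+1 simultaneously sorts all b blocks: for every j < b and every s with 0 ≤ s ≤ h, the output entry y_{j(3h+1)+s} equals the coercion of the element of rank s of the multiset {z^{(j)}_0, …, z^{(j)}_h}. -/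
/-!
Every segment has length `3h+1`, so the window of length `2h+1` starting at position
`s ≤ h` of segment `j` lies inside that segment: it is `h - s` copies of `⊥`, the whole block
`z j`, and `s` copies of `⊤`. Sorting keeps the `⊥`s in front and the `⊤`s behind, and the
coercion is monotone, so the sorted window is `⊥^(h-s)`, the sorted block, `⊤^s`; its entry of
rank `h` is the entry of rank `s` of the sorted block.
-/

namespace List

variable {ι β : Type*}

theorem drop_mul_flatMap_of_length_eq (f : ι → List β) {m : ℕ} (hf : ∀ i, (f i).length = m)
    (j : ℕ) (l : List ι) : (l.flatMap f).drop (j * m) = (l.drop j).flatMap f := by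
  induction j generalizing l with
  | zero => simp
  | succ j ih =>
    cases l with
    | nil => simp
    | cons i l => rw [flatMap_cons, Nat.succ_mul, add_comm, ← drop_drop, drop_left' (hf i), ih]; rfl

theorem drop_mul_add_flatMap_of_length_eq (f : ι → List β) {m : ℕ} (hf : ∀ i, (f i).length = m)
    (l : List ι) {j : ℕ} (hj : j < l.length) (s : ℕ) :
    (l.flatMap f).drop (j * m + s) = (f l[j] ++ (l.drop (j + 1)).flatMap f).drop s := by
  rw [← drop_drop, drop_mul_flatMap_of_length_eq f hf, drop_eq_getElem_cons hj, flatMap_cons]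

theorem take_drop_replicate_append_append_replicate {h s : ℕ} (hs : s ≤ h) (x y : β)
    {l : List β} (hl : l.length = h + 1) (rest : List β) :
    ((replicate h x ++ l ++ replicate h y ++ rest).drop s).take (2 * h + 1) =
      replicate (h - s) x ++ l ++ replicate s y := by
  have hmin : min (2 * h + 1) (h - s) = h - s := by omega
  have hlen : 2 * h + 1 - (h - s) = (h + 1) + s := by omega
  simp [drop_append, take_append, hl, drop_replicate, take_replicate, Nat.sub_eq_zero_of_le hs,
    hmin, hlen, hs, take_of_length_le (l := l) (by omega : l.length ≤ h + 1 + s)]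

theorem getElem?_replicate_append_append_add_s2 (p : ℕ) (x : β) (L R : List β) {i : ℕ}
    (hi : i < L.length) : (replicate p x ++ L ++ R)[p + i]? = L[i]? := by
  simp [getElem?_append_left, getElem?_append_right, hi]

end List

namespace Multiset

variable {α β : Type*} [LinearOrder α] [LinearOrder β] [OrderBot β] [OrderTop β]

theorem sort_replicate_bot_append_map_append_replicate_top {c : α → β} (hc : Monotone c)
    (l : List α) (p q : ℕ) :
    sort ((List.replicate p ⊥ ++ l.map c ++ List.replicate q ⊤ : List β) : Multiset β) =
      List.replicate p ⊥ ++ (sort (l : Multiset α)).map c ++ List.replicate q ⊤ := by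
  have hperm : ((List.replicate p ⊥ ++ l.map c ++ List.replicate q ⊤ : List β) : Multiset β) =
      (List.replicate p ⊥ ++ (sort (l : Multiset α)).map c ++ List.replicate q ⊤ : List β) := by
    simp only [← coe_add, ← map_coe, sort_eq]
  have hsorted :
      (List.replicate p ⊥ ++ (sort (l : Multiset α)).map c ++ List.replicate q ⊤).Pairwise
        (· ≤ ·) := by
    simp [List.pairwise_append, List.pairwise_replicate, -coe_sort, (pairwise_sort _ _).map c hc]
  rw [hperm, coe_sort]
  exact List.mergeSort_eq_self _ hsorted

end Multiset

theorem median_filter_sorts_all_blocks_general {α : Type*} [LinearOrder α] (h b : ℕ)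
    (z : Fin b → Fin (h + 1) → α) :
    ∀ j : Fin b, ∀ s : ℕ, s ≤ h →
      (Multiset.sort
          (↑(((((List.finRange b).flatMap (fun j' =>
                  List.replicate h (⊥ : WithBot (WithTop α)) ++
                  (List.ofFn (z j')).map
                    (fun a => ((↑(↑a : WithTop α) : WithBot (WithTop α)))) ++
                  List.replicate h (⊤ : WithBot (WithTop α)))).drop
                ((j : ℕ) * (3 * h + 1) + s)).take (2 * h + 1))) :
            Multiset (WithBot (WithTop α))) (· ≤ ·))[h]? =
      ((Multiset.sort (↑(List.ofFn (z j)) : Multiset α) (· ≤ ·))[s]?).map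
        (fun a => ((↑(↑a : WithTop α) : WithBot (WithTop α)))) := by
  intro j s hs
  -- the coercion `α → WithBot (WithTop α)` elaborates through the list and option monads
  simp only [bind_pure_comp, Functor.map, List.map_map, Option.map_map]
  have hc : Monotone (WithBot.some ∘ WithTop.some : α → WithBot (WithTop α)) :=
    WithBot.coe_mono.comp WithTop.coe_mono
  rw [List.drop_mul_add_flatMap_of_length_eq _ (fun _ => by simp; omega) _ (by simp),
    List.getElem_finRange, List.take_drop_replicate_append_append_replicate hs _ _ (by simp),
    Multiset.sort_replicate_bot_append_map_append_replicate_top hc]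
  have hmedian := List.getElem?_replicate_append_append_add_s2 (h - s) ⊥
    ((Multiset.sort (List.ofFn (z j) : Multiset α)).map (WithBot.some ∘ WithTop.some))
    (List.replicate s ⊤) (i := s) (by simp; omega)
  rwa [Nat.sub_add_cancel hs, List.getElem?_map] at hmedian

/-- Concatenate `b ≥ 1` segments, where segment `j` consists of `h` copies
of `⊥`, the block `z j : Fin (h+1) → α` (coerced into `WithBot (WithTop α)`), and `h` copies
of `⊤`.  The resulting vector `x` has length `b(3h+1)`.  Then the median filter of `x` with
window size `2h+1` simultaneously sorts all `b` blocks: for every `j < b` and `0 ≤ s ≤ h`,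
the output entry at position `j(3h+1)+s` (the element of rank `h` of the window multiset
starting at that position) equals the element of rank `s` of the multiset `{z j 0, …, z j h}`. -/
theorem median_filter_sorts_all_blocks {α : Type*} [LinearOrder α] (h b : ℕ) (hb : 1 ≤ b)
    (z : Fin b → Fin (h + 1) → α) :
    ∀ j : Fin b, ∀ s : ℕ, s ≤ h →
      (Multiset.sort
          (↑(((((List.finRange b).flatMap (fun j' =>
                  List.replicate h (⊥ : WithBot (WithTop α)) ++
                  (List.ofFn (z j')).map
                    (fun a => ((↑(↑a : WithTop α) : WithBot (WithTop α)))) ++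
                  List.replicate h (⊤ : WithBot (WithTop α)))).drop
                ((j : ℕ) * (3 * h + 1) + s)).take (2 * h + 1))) :
            Multiset (WithBot (WithTop α))) (· ≤ ·))[h]? =
      ((Multiset.sort (↑(List.ofFn (z j)) : Multiset α) (· ≤ ·))[s]?).map
        (fun a => ((↑(↑a : WithTop α) : WithBot (WithTop α)))) :=
  median_filter_sorts_all_blocks_general h b z
end

section
/- Let α be a linear order, k ≥ 1, and a : Fin k → α injective. Let σ be the permutation of Fin k sorting a, i.e. a(σ 0) < a(σ 1) < … < a(σ(k−1)). Identify Fin k with a subset of Fin (k+1), with k serving as a sentinel index, and define prev₀, next₀ : Fin (k+1) → Fin (k+1) by the sorted-list initialization: next₀(k) = σ(0), next₀(σ(i)) = σ(i+1) for i < k−1, next₀(σ(k−1)) = k, prev₀(k) = σ(k−1), prev₀(σ(i+1)) = σ(i) for i < k−1, and prev₀(σ(0)) = k. For an index i < k, the delete step maps a pair (prev, next) to (Function.update prev (next i) (prev i), Function.update next (prev i) (next i)), and the undelete step maps (prev, next) to (Function.update prev (next i) i, Function.update next (prev i) i). Let (prev₁, next₁) be the result of applying delete steps for i = k−1, k−2,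 …, 0, in this order, starting from (prev₀, next₀); and for 0 ≤ t < k let (prev₂, next₂) be the result of then applying undelete steps for i = 0, 1, …, t, in this order, starting from (prev₁, next₁). Then (prev₂, next₂) represents the sorted doubly-linked list of the elements a(0), …, a(t): if i₀, i₁, …, i_t is the enumeration of the index set {0, 1, …, t} with a(i₀) < a(i₁) < … < a(i_t), then next₂(k) = i₀, next₂(i_j) = i_{j+1} for all j < t, next₂(i_t) = k, and symmetrically prev₂(i₀) = k, prev₂(i_{j+1}) = i_j for all j < t, and prev₂(k) = i_t. -/
/-- One delete step of the dancing-links scheme on a doubly-linked list represented by a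
pair `(prev, next)` of pointer functions on `Fin (k+1)`:
`prev[next i] ← prev i` and `next[prev i] ← next i`. -/
def delStep {k : ℕ} (i : Fin (k + 1))
    (pn : (Fin (k + 1) → Fin (k + 1)) × (Fin (k + 1) → Fin (k + 1))) :
    (Fin (k + 1) → Fin (k + 1)) × (Fin (k + 1) → Fin (k + 1)) :=
  (Function.update pn.1 (pn.2 i) (pn.1 i), Function.update pn.2 (pn.1 i) (pn.2 i))

/-- One undelete step of the dancing-links scheme:
`prev[next i] ← i` and `next[prev i] ← i`. -/
def undelStep {k : ℕ} (i : Fin (k + 1))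
    (pn : (Fin (k + 1) → Fin (k + 1)) × (Fin (k + 1) → Fin (k + 1))) :
    (Fin (k + 1) → Fin (k + 1)) × (Fin (k + 1) → Fin (k + 1)) :=
  (Function.update pn.1 (pn.2 i) i, Function.update pn.2 (pn.1 i) i)

/-!
Say that `pn` is the circular list `s, L₀, …, Lₙ₋₁, s` when consecutive entries are linked in
both directions. Deleting an entry `x` leaves the circular list with `x` removed, and undeleting
`x` right afterwards restores `pn` exactly, since the stale pointers of `x` still lead to its
former neighbours. Hence undeleting `0, …, t` after deleting `k-1, …, 0` undoes the last `t+1`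
deletions: the result is the state after deleting `k-1, …, t+1` only, i.e. the sorted list of
all indices with those `> t` removed, which is the sorted list of `0, …, t`.
-/

namespace List

theorem isChain_cons_ofFn_append_singleton {β : Type*} {R : β → β → Prop} {s : β} {n : ℕ}
    (hn : 0 < n) (f : Fin n → β) :
    IsChain R (s :: ofFn f ++ [s]) ↔
      R s (f ⟨0, hn⟩) ∧ (∀ (j : ℕ) (hj : j + 1 < n), R (f ⟨j, by omega⟩) (f ⟨j + 1, hj⟩)) ∧
        R (f ⟨n - 1, by omega⟩) s := by
  obtain ⟨m, rfl⟩ : ∃ m, n = m + 1 := ⟨n - 1, by omega⟩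
  have hlast : (s :: ofFn f).getLast? = some (f (Fin.last m)) := by
    rw [ofFn_succ', concat_eq_append, ← cons_append, getLast?_append]; simp
  rw [isChain_append, hlast, isChain_cons, isChain_ofFn]
  simp [and_assoc, Fin.last]

theorem Sublist.eq_of_mem_iff_of_sortedLT_map {α β : Type*} [LinearOrder α] {f : β → α}
    (hf : Function.Injective f) {l₁ l₂ l : List β} (hsub : l₁ <+ l) (hl : (l.map f).SortedLT)
    (h₂ : (l₂.map f).SortedLT) (hmem : ∀ x, x ∈ l₁ ↔ x ∈ l₂) : l₁ = l₂ := by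
  have h₁ : (l₁.map f).SortedLT := (hl.pairwise.sublist (hsub.map f)).sortedLT
  exact map_injective_iff.2 hf (h₁.eq_of_mem_iff h₂ fun b => by simp only [mem_map, hmem])

theorem filter_ofFn_eq_ofFn {α β : Type*} [LinearOrder α] {f : β → α}
    (hf : Function.Injective f) {n m : ℕ} {σ : Fin n → β} {τ : Fin m → β}
    (hσ : StrictMono (f ∘ σ)) (hτ : StrictMono (f ∘ τ)) {p : β → Bool}
    (hp : ∀ x, x ∈ Set.range τ ↔ x ∈ Set.range σ ∧ p x) : (ofFn σ).filter p = ofFn τ := by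
  refine (filter_sublist).eq_of_mem_iff_of_sortedLT_map hf ?_ ?_ fun x => ?_
  · rw [map_ofFn]; exact sortedLT_ofFn_iff.2 hσ
  · rw [map_ofFn]; exact sortedLT_ofFn_iff.2 hτ
  · rw [mem_filter, mem_ofFn, mem_ofFn]; exact (hp x).symm

theorem take_finRange {m n : ℕ} (h : m ≤ n) :
    (finRange n).take m = (finRange m).map (Fin.castLE h) := by
  apply ext_getElem <;> simp [h]

theorem mem_drop_finRange {m n : ℕ} {x : Fin n} : x ∈ (finRange n).drop m ↔ m ≤ x := by
  simp only [mem_drop_iff_getElem, getElem_finRange, length_finRange]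
  refine ⟨fun ⟨i, _, hi⟩ => ?_, fun h => ⟨x - m, by omega, ?_⟩⟩ <;>
    simp [Fin.ext_iff] at * <;> omega

theorem subset_erase_of_cons_subset {α : Type*} [DecidableEq α] {d : α} {D L : List α}
    (hD : (d :: D).Nodup) (h : d :: D ⊆ L) : D ⊆ L.erase d :=
  fun y hy => (mem_erase_of_ne (by grind)).2 (h (mem_cons_of_mem d hy))

theorem exists_split_around_of_mem {α : Type*} [DecidableEq α] {s x : α} {L : List α}
    (hnd : (s :: L).Nodup) (hx : x ∈ L) :
    ∃ A u w B, s :: L ++ [s] = A ++ u :: x :: w :: B ∧ s :: L.erase x ++ [s] = A ++ u :: w :: B ∧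
      x ∉ A ++ [u] ∧ x ∉ w :: B := by
  obtain ⟨l₁, l₂, rfl⟩ := append_of_mem hx
  have hx₁ : x ∉ s :: l₁ := by grind
  have hx₂ : x ∉ l₂ ++ [s] := by grind
  rw [erase_append_right _ (by grind), erase_cons_head]
  obtain ⟨A, u, hAu⟩ : ∃ A u, s :: l₁ = A ++ [u] :=
    ⟨_, _, (dropLast_append_getLast (cons_ne_nil s l₁)).symm⟩
  obtain ⟨w, B, hwB⟩ : ∃ w B, l₂ ++ [s] = w :: B := by
    cases l₂ with
    | nil => exact ⟨s, [], rfl⟩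
    | cons a l => exact ⟨a, l ++ [s], rfl⟩
  refine ⟨A, u, w, B, ?_, ?_, hAu ▸ hx₁, hwB ▸ hx₂⟩
  · calc s :: (l₁ ++ x :: l₂) ++ [s] = (s :: l₁) ++ x :: (l₂ ++ [s]) := by simp
      _ = A ++ u :: x :: w :: B := by rw [hAu, hwB]; simp
  · calc s :: (l₁ ++ l₂) ++ [s] = (s :: l₁) ++ (l₂ ++ [s]) := by simp
      _ = A ++ u :: w :: B := by rw [hAu, hwB]; simp

end List

theorem Fin.range_eq_Iic_of_injective {n : ℕ} {t : Fin n} {τ : Fin (t + 1) → Fin n}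
    (hinj : Function.Injective τ) (hle : ∀ j, τ j ≤ t) : Set.range τ = Set.Iic t := by
  have : Finset.univ.image τ = Finset.Iic t :=
    Finset.eq_of_subset_of_card_le (fun x hx => by
      obtain ⟨j, -, rfl⟩ := Finset.mem_image.1 hx; exact Finset.mem_Iic.2 (hle j))
      (by rw [Finset.card_image_of_injective _ hinj, Fin.card_Iic]; simp)
  simpa using congrArg (fun s : Finset (Fin n) => (s : Set (Fin n))) this

namespace DancingLinks

variable {k : ℕ}

abbrev Pointers (k : ℕ) := (Fin (k + 1) → Fin (k + 1)) × (Fin (k + 1) → Fin (k + 1))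

def Links (pn : Pointers k) (x y : Fin (k + 1)) : Prop := pn.2 x = y ∧ pn.1 y = x

def IsCircularList (pn : Pointers k) (s : Fin (k + 1)) (L : List (Fin (k + 1))) : Prop :=
  (s :: L).Nodup ∧ (s :: L ++ [s]).IsChain (Links pn)

section Step

variable {pn : Pointers k} {u x w : Fin (k + 1)}

theorem links_delStep (hux : Links pn u x) (hxw : Links pn x w) : Links (delStep x pn) u w := by
  obtain ⟨rfl, rfl⟩ := And.intro hux.2 hxw.1
  simp [Links, delStep]

theorem links_delStep_of_ne (hux : Links pn u x) (hxw : Links pn x w) {y z : Fin (k + 1)}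
    (hyz : Links pn y z) (hy : y ≠ x) (hz : z ≠ x) : Links (delStep x pn) y z := by
  obtain ⟨rfl, rfl⟩ := And.intro hux.2 hxw.1
  refine ⟨?_, ?_⟩
  · show Function.update pn.2 (pn.1 x) (pn.2 x) y = z
    rw [Function.update_of_ne (fun h => hz (by rw [← hyz.1, h, hux.1])), hyz.1]
  · show Function.update pn.1 (pn.2 x) (pn.1 x) z = y
    rw [Function.update_of_ne (fun h => hy (by rw [← hyz.2, h, hxw.2])), hyz.2]

theorem undelStep_delStep (hux : Links pn u x) (hxw : Links pn x w) :
    undelStep x (delStep x pn) = pn := by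
  obtain ⟨rfl, rfl⟩ := And.intro hux.2 hxw.1
  obtain ⟨prev, next⟩ := pn
  simp only [Links] at hux hxw
  ext y : 2 <;> simp [undelStep, delStep, Function.update_apply] <;> grind

theorem isChain_links_delStep {A B : List (Fin (k + 1))}
    (h : (A ++ u :: x :: w :: B).IsChain (Links pn)) (hA : x ∉ A ++ [u]) (hB : x ∉ w :: B) :
    (A ++ u :: w :: B).IsChain (Links (delStep x pn)) := by
  simp only [List.isChain_append_cons_cons, List.isChain_cons_cons] at h ⊢
  obtain ⟨hAu, hux, hxw, hwB⟩ := h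
  refine ⟨hAu.imp_of_mem_imp ?_, links_delStep hux hxw, hwB.imp_of_mem_imp ?_⟩ <;>
    exact fun y z hy hz hyz => links_delStep_of_ne hux hxw hyz (by grind) (by grind)

end Step

theorem isCircularList_map_castSucc_ofFn_iff {pn : Pointers k} {n : ℕ} (hn : 0 < n)
    {f : Fin n → Fin k} (hf : Function.Injective f) :
    IsCircularList pn (Fin.last k) ((List.ofFn f).map Fin.castSucc) ↔
      Links pn (Fin.last k) (f ⟨0, hn⟩).castSucc ∧
      (∀ (j : ℕ) (hj : j + 1 < n),
        Links pn (f ⟨j, by omega⟩).castSucc (f ⟨j + 1, hj⟩).castSucc) ∧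
      Links pn (f ⟨n - 1, by omega⟩).castSucc (Fin.last k) := by
  have hnodup : (Fin.last k :: (List.ofFn f).map Fin.castSucc).Nodup :=
    List.nodup_cons.2 ⟨by simp [Fin.castSucc_ne_last],
      (List.nodup_ofFn_ofInjective hf).map (Fin.castSucc_injective k)⟩
  rw [IsCircularList, and_iff_right hnodup, List.map_ofFn]
  exact List.isChain_cons_ofFn_append_singleton hn _

namespace IsCircularList

variable {pn : Pointers k} {s x : Fin (k + 1)} {L D : List (Fin (k + 1))}

theorem delStep (h : IsCircularList pn s L) (hx : x ∈ L) :
    IsCircularList (_root_.delStep x pn) s (L.erase x) := by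
  obtain ⟨A, u, w, B, hL, hL', hA, hB⟩ := List.exists_split_around_of_mem h.1 hx
  refine ⟨?_, hL' ▸ isChain_links_delStep (hL ▸ h.2) hA hB⟩
  have hsx : s ≠ x := fun hsx => (List.nodup_cons.1 h.1).1 (hsx ▸ hx)
  rw [← List.erase_cons_tail (by simpa using hsx)]
  exact h.1.erase x

theorem undelStep_delStep (h : IsCircularList pn s L) (hx : x ∈ L) :
    undelStep x (_root_.delStep x pn) = pn := by
  obtain ⟨A, u, w, B, hL, -⟩ := List.exists_split_around_of_mem h.1 hx
  have hchain := hL ▸ h.2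
  simp only [List.isChain_append_cons_cons, List.isChain_cons_cons] at hchain
  exact DancingLinks.undelStep_delStep hchain.2.1 hchain.2.2.1

theorem foldl_delStep (h : IsCircularList pn s L) (hD : D.Nodup) (hDL : D ⊆ L) :
    IsCircularList (D.foldl (fun pn x => _root_.delStep x pn) pn) s (L.diff D) := by
  induction D generalizing pn L with
  | nil => exact h
  | cons d D ih =>
    rw [List.foldl_cons, List.diff_cons]
    exact ih (h.delStep (hDL List.mem_cons_self)) (List.nodup_cons.1 hD).2
      (List.subset_erase_of_cons_subset hD hDL)

theorem foldl_undelStep_foldl_delStep (h : IsCircularList pn s L) (hD : D.Nodup)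
    (hDL : D ⊆ L) :
    D.reverse.foldl (fun pn x => undelStep x pn)
      (D.foldl (fun pn x => _root_.delStep x pn) pn) = pn := by
  induction D generalizing pn L with
  | nil => rfl
  | cons d D ih =>
    simp only [List.reverse_cons, List.foldl_append, List.foldl_cons, List.foldl_nil]
    rw [ih (h.delStep (hDL List.mem_cons_self)) (List.nodup_cons.1 hD).2
      (List.subset_erase_of_cons_subset hD hDL)]
    exact h.undelStep_delStep (hDL List.mem_cons_self)

theorem foldl_undelStep_foldl_delStep_append (h : IsCircularList pn s L)
    {D₁ D₂ : List (Fin (k + 1))} (hD : (D₁ ++ D₂).Nodup) (hDL : D₁ ++ D₂ ⊆ L) :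
    D₂.reverse.foldl (fun pn x => undelStep x pn)
        ((D₁ ++ D₂).foldl (fun pn x => _root_.delStep x pn) pn) =
      D₁.foldl (fun pn x => _root_.delStep x pn) pn := by
  rw [List.foldl_append]
  obtain ⟨hD₁, hD₂, hdisj⟩ := List.nodup_append.1 hD
  have h₁ := h.foldl_delStep hD₁ fun x hx => hDL (List.mem_append_left _ hx)
  refine h₁.foldl_undelStep_foldl_delStep hD₂ fun x hx => ?_
  rw [(List.nodup_cons.1 h.1).2.mem_sdiff_iff]
  exact ⟨hDL (List.mem_append_right _ hx), fun hx₁ => hdisj x hx₁ x hx rfl⟩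

theorem foldl_undelStep_foldl_delStep_finRange (h : IsCircularList pn (Fin.last k) L)
    (hL : ∀ i : Fin k, i.castSucc ∈ L) (t : Fin k) :
    IsCircularList ((List.finRange (t + 1)).foldl
        (fun pn j => undelStep (Fin.castLE t.isLt j).castSucc pn)
        ((List.finRange k).reverse.foldl (fun pn i => _root_.delStep i.castSucc pn) pn))
      (Fin.last k) (L.filter fun x : Fin (k + 1) => (x : ℕ) ≤ t) := by
  set E := ((List.finRange k).drop (t + 1)).reverse.map Fin.castSucc
  set D := (((List.finRange (t + 1)).map (Fin.castLE t.isLt)).map Fin.castSucc).reverse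
  have hsplit : (List.finRange k).reverse.map Fin.castSucc = E ++ D := by
    rw [← List.take_append_drop (t + 1) (List.finRange k), List.take_finRange t.isLt]
    simp [E, D]
  have hnodup : (E ++ D).Nodup := by
    rw [← hsplit]
    exact (List.nodup_reverse.2 (List.nodup_finRange k)).map (Fin.castSucc_injective k)
  have hsub : E ++ D ⊆ L := by
    rw [← hsplit]
    intro x hx
    obtain ⟨i, -, rfl⟩ := List.mem_map.1 hx
    exact hL i
  have hE : L.diff E = L.filter fun x : Fin (k + 1) => (x : ℕ) ≤ t := by
    rw [(List.nodup_cons.1 h.1).2.sdiff_eq_filter]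
    refine List.filter_congr fun x hx => ?_
    obtain ⟨i, rfl⟩ := Fin.exists_castSucc_eq.2 (ne_of_mem_of_not_mem hx (List.nodup_cons.1 h.1).1)
    simp [E, List.mem_drop_finRange, -List.map_drop]
  convert h.foldl_delStep (List.nodup_append.1 hnodup).1
    (fun x hx => hsub (List.mem_append_left _ hx)) using 1
  · rw [← h.foldl_undelStep_foldl_delStep_append hnodup hsub, ← hsplit]
    simp only [D, List.reverse_reverse, List.foldl_map]
  · exact hE.symm

end IsCircularList

end DancingLinks

open DancingLinks

/-- Let `a : Fin k → α` be injective (`k ≥ 1`) and let `σ` be the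
permutation sorting `a`, i.e. `a (σ 0) < a (σ 1) < ⋯ < a (σ (k-1))`.  Initialise
`(prev₀, next₀)` on the index set `Fin (k+1)` (with the sentinel `k = Fin.last k`) as the
sorted doubly-linked list of all of `a`.  Let `(prev₁, next₁)` be the result of applying
delete steps for `i = k-1, k-2, …, 0` (unwinding, so the list becomes empty), and for
`t < k` let `(prev₂, next₂)` be the result of then applying undelete steps for
`i = 0, 1, …, t`.  Then `(prev₂, next₂)` represents the sorted doubly-linked list of the
elements `a 0, …, a t`: if `τ : Fin (t+1) → Fin k` enumerates the index set `{0, …, t}`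
in increasing order of `a`-values (`τ` injective, `τ j ≤ t`, `a ∘ τ` strictly monotone),
then `next₂` steps through `k, τ 0, τ 1, …, τ t, k` and `prev₂` steps backwards. -/
theorem unwind_undelete_represents_sorted_prefix {α : Type*} [LinearOrder α]
    (k : ℕ) (hk : 1 ≤ k) (a : Fin k → α) (ha : Function.Injective a)
    (σ : Equiv.Perm (Fin k)) (hσ : StrictMono fun i => a (σ i))
    (prev₀ next₀ : Fin (k + 1) → Fin (k + 1))
    (hn0 : next₀ (Fin.last k) = (σ ⟨0, hk⟩).castSucc)
    (hn1 : ∀ (i : ℕ) (hi : i + 1 < k),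
      next₀ ((σ ⟨i, by omega⟩).castSucc) = (σ ⟨i + 1, hi⟩).castSucc)
    (hn2 : next₀ ((σ ⟨k - 1, by omega⟩).castSucc) = Fin.last k)
    (hp0 : prev₀ (Fin.last k) = (σ ⟨k - 1, by omega⟩).castSucc)
    (hp1 : ∀ (i : ℕ) (hi : i + 1 < k),
      prev₀ ((σ ⟨i + 1, hi⟩).castSucc) = (σ ⟨i, by omega⟩).castSucc)
    (hp2 : prev₀ ((σ ⟨0, hk⟩).castSucc) = Fin.last k)
    (PN₁ : (Fin (k + 1) → Fin (k + 1)) × (Fin (k + 1) → Fin (k + 1)))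
    (hPN₁ : PN₁ = ((List.finRange k).reverse).foldl
      (fun pn i => delStep i.castSucc pn) (prev₀, next₀))
    (t : Fin k)
    (PN₂ : (Fin (k + 1) → Fin (k + 1)) × (Fin (k + 1) → Fin (k + 1)))
    (hPN₂ : PN₂ = (List.finRange ((t : ℕ) + 1)).foldl
      (fun pn j => undelStep ((Fin.castLE t.isLt j).castSucc) pn) PN₁)
    (τ : Fin ((t : ℕ) + 1) → Fin k)
    (hτinj : Function.Injective τ)
    (hτle : ∀ j, (τ j : ℕ) ≤ (t : ℕ))
    (hτmono : StrictMono fun j => a (τ j)) :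
    PN₂.2 (Fin.last k) = (τ ⟨0, by omega⟩).castSucc ∧
    (∀ (j : ℕ) (hj : j + 1 < (t : ℕ) + 1),
      PN₂.2 ((τ ⟨j, by omega⟩).castSucc) = (τ ⟨j + 1, hj⟩).castSucc) ∧
    PN₂.2 ((τ ⟨(t : ℕ), by omega⟩).castSucc) = Fin.last k ∧
    PN₂.1 ((τ ⟨0, by omega⟩).castSucc) = Fin.last k ∧
    (∀ (j : ℕ) (hj : j + 1 < (t : ℕ) + 1),
      PN₂.1 ((τ ⟨j + 1, hj⟩).castSucc) = (τ ⟨j, by omega⟩).castSucc) ∧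
    PN₂.1 (Fin.last k) = (τ ⟨(t : ℕ), by omega⟩).castSucc := by
  have h₀ : IsCircularList (prev₀, next₀) (Fin.last k) ((List.ofFn σ).map Fin.castSucc) :=
    (isCircularList_map_castSucc_ofFn_iff hk σ.injective).2
      ⟨⟨hn0, hp2⟩, fun i hi => ⟨hn1 i hi, hp1 i hi⟩, ⟨hn2, hp0⟩⟩
  have h₁ := h₀.foldl_undelStep_foldl_delStep_finRange
    (fun i => List.mem_map_of_mem (List.mem_ofFn.2 (σ.surjective i))) t
  rw [← hPN₁, ← hPN₂, List.filter_map, List.filter_ofFn_eq_ofFn ha hσ hτmono] at h₁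
  · obtain ⟨⟨hfirst, hfirst'⟩, hmid, ⟨hlast, hlast'⟩⟩ :=
      (isCircularList_map_castSucc_ofFn_iff (Nat.succ_pos t) hτinj).1 h₁
    exact ⟨hfirst, fun j hj => (hmid j hj).1, hlast, hfirst', fun j hj => (hmid j hj).2, hlast'⟩
  · intro i
    simp [Fin.range_eq_Iic_of_injective hτinj hτle]
end

section
/- Let α be a linear order, h a natural number, and let L_A, L_B be disjoint finsets over α with |L_A| + |L_B| = 2h+1. Suppose S_A ⊆ L_A and S_B ⊆ L_B satisfy S_A ∪ S_B = H_h(L_A ∪ L_B). Then the element of rank h of L_A ∪ L_B (the median of the window) equals the minimum of the two peeks: it is min(min'(L_A \ S_A), min'(L_B \ S_B)), where min'(T) denotes the minimum of T computed in WithTop α (equal to ⊤ if T is empty). -/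
/-! Since `S_A ⊆ L_A` and `S_B ⊆ L_B` with `L_A`, `L_B` disjoint, the union of the two remainders
`L_A \ S_A` and `L_B \ S_B` is `(L_A ∪ L_B) \ H_h(L_A ∪ L_B)`, i.e. the sorted window with its first
`h` entries dropped; the minimum of that sorted tail is its head, the element of rank `h`. -/

/-- `smallSet m L` is `H_m(L)`: the set of the `m` smallest elements of the finset `L`
(the first `m` entries of the increasing enumeration of `L`). -/
def smallSet {α : Type*} [LinearOrder α] (m : ℕ) (L : Finset α) : Finset α :=
  ((L.sort (· ≤ ·)).take m).toFinset

theorem Finset.union_sdiff_union_of_disjoint {α : Type*} [DecidableEq α] {s t u v : Finset α}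
    (hsv : Disjoint s v) (htu : Disjoint t u) :
    (s ∪ t) \ (u ∪ v) = (s \ u) ∪ (t \ v) := by
  rw [union_sdiff_distrib, sdiff_union_distrib, sdiff_union_distrib, hsv.sdiff_eq_left,
    htu.sdiff_eq_left, inter_eq_left.mpr sdiff_subset, inter_eq_right.mpr sdiff_subset]

theorem List.Pairwise.min_toFinset_drop {α : Type*} [LinearOrder α] {l : List α}
    (hl : l.Pairwise (· ≤ ·)) (i : ℕ) (hi : i < l.length) :
    (l.drop i).toFinset.min = l[i] := by
  have hdrop := hl.drop (i := i)
  rw [List.drop_eq_getElem_cons hi] at hdrop ⊢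
  rw [List.toFinset_cons, Finset.min_insert, min_eq_left]
  exact Finset.le_min fun b hb ↦
    WithTop.coe_le_coe.mpr (List.rel_of_pairwise_cons hdrop (List.mem_toFinset.mp hb))

theorem sdiff_smallSet {α : Type*} [LinearOrder α] (m : ℕ) (L : Finset α) :
    L \ smallSet m L = ((L.sort (· ≤ ·)).drop m).toFinset := by
  have hdisj := List.disjoint_take_drop (L.sort_nodup (· ≤ ·)) (le_refl m)
  conv_lhs => arg 1; rw [← Finset.sort_toFinset (s := L) (r := (· ≤ ·)),
    ← List.take_append_drop m (L.sort (· ≤ ·)), List.toFinset_append]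
  exact Finset.union_sdiff_cancel_left (List.disjoint_toFinset_iff_disjoint.mpr hdisj)

/-- Let `L_A, L_B` be disjoint finsets with `|L_A| + |L_B| = 2h+1`, and let
`S_A ⊆ L_A`, `S_B ⊆ L_B` with `S_A ∪ S_B = H_h(L_A ∪ L_B)`.  Then the element of rank `h`
of `L_A ∪ L_B` (the median of the window) equals the minimum of the two peeks
`min'(L_A \ S_A)` and `min'(L_B \ S_B)`, where `min'` is the minimum computed in
`WithTop α` (`⊤` for the empty set). -/
theorem median_eq_min_of_peeks {α : Type*} [LinearOrder α] (h : ℕ)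
    (LA LB SA SB : Finset α) (hdisj : Disjoint LA LB)
    (hcard : LA.card + LB.card = 2 * h + 1)
    (hSA : SA ⊆ LA) (hSB : SB ⊆ LB)
    (hinv : SA ∪ SB = smallSet h (LA ∪ LB)) :
    (((LA ∪ LB).sort (· ≤ ·))[h]'(by
        rw [Finset.length_sort, Finset.card_union_of_disjoint hdisj]; omega) : WithTop α) =
      min (LA \ SA).min (LB \ SB).min := by
  rw [← Finset.min_union, ← Finset.union_sdiff_union_of_disjoint
      (hdisj.mono_right hSB) (hdisj.symm.mono_right hSA), hinv, sdiff_smallSet,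
    ((LA ∪ LB).pairwise_sort (· ≤ ·)).min_toFinset_drop]
end

section
/- Assume the invariant setting, and assume additionally that H_h(L_A ∪ L_B) ⊆ L_B (i.e. S_A = ∅ and S_B = H_h(L_A ∪ L_B)). Then the h smallest elements of the new window do not depend on the A side: H_h(L') = H_h(L_B ∪ {a_B}). -/
/-!
Since `H_h(L_A ∪ L_B)` lies in `L_B`, every element of `L_A` exceeds all `h` elements of this
set, which stay in `L_B ∪ {a_B}`. Hence the `h` smallest elements of `L_B ∪ {a_B}` lie below
every element of `L_A`, and adding elements of `L_A` to `L_B ∪ {a_B}` does not change them.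
-/

section

open Finset

variable {α : Type*} [LinearOrder α]

theorem List.mem_take_iff_length_filter_le {l : List α} (hl : l.Pairwise (· < ·)) {m : ℕ}
    {x : α} : x ∈ l.take m ↔ x ∈ l ∧ (l.filter (· ≤ x)).length ≤ m := by
  induction l generalizing m with
  | nil => simp
  | cons a t ih =>
    obtain ⟨hat, ht⟩ := List.pairwise_cons.mp hl
    have : x = a → t.filter (· ≤ x) = [] := by
      rintro rfl
      exact List.filter_eq_nil_iff.mpr fun y hy => by simpa using hat y hy
    cases m <;> grind

namespace smallSet

theorem mem_iff {m : ℕ} {L : Finset α} {x : α} :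
    x ∈ smallSet m L ↔ x ∈ L ∧ #{y ∈ L | y ≤ x} ≤ m := by
  have hlen : ((L.sort (· ≤ ·)).filter (· ≤ x)).length = #{y ∈ L | y ≤ x} := by
    rw [← Multiset.coe_card, ← Multiset.filter_coe, sort_eq]
    rfl
  rw [smallSet, List.mem_toFinset, List.mem_take_iff_length_filter_le L.sortedLT_sort.pairwise,
    mem_sort, hlen]

theorem card_eq (m : ℕ) (L : Finset α) : #(smallSet m L) = min m #L := by
  rw [smallSet, List.toFinset_card_of_nodup ((L.sort_nodup _).sublist (List.take_sublist _ _)),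
    List.length_take, length_sort]

theorem subset (m : ℕ) (L : Finset α) : smallSet m L ⊆ L :=
  fun _ hx => (mem_iff.mp hx).1

theorem lt_of_notMem {m : ℕ} {L : Finset α} {s y : α} (hs : s ∈ smallSet m L) (hy : y ∈ L)
    (hyS : y ∉ smallSet m L) : s < y := by
  by_contra! hys
  exact hyS (mem_iff.mpr ⟨hy, (card_le_card (monotone_filter_right L
    fun _ _ hz => hz.trans hys)).trans (mem_iff.mp hs).2⟩)

theorem eq_of_forall_lt {m : ℕ} {L S : Finset α} (hSL : S ⊆ L) (hS : #S = m)
    (hlt : ∀ s ∈ S, ∀ y ∈ L, y ∉ S → s < y) : smallSet m L = S := by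
  ext x
  rw [mem_iff]
  constructor
  · rintro ⟨hxL, hcard⟩
    by_contra hxS
    have : insert x S ⊆ {y ∈ L | y ≤ x} := insert_subset (mem_filter.mpr ⟨hxL, le_rfl⟩)
      fun s hs => mem_filter.mpr ⟨hSL hs, (hlt s hs x hxL hxS).le⟩
    have := card_le_card this
    rw [card_insert_of_notMem hxS] at this
    omega
  · intro hxS
    refine ⟨hSL hxS, hS ▸ card_le_card fun y hy => ?_⟩
    obtain ⟨hyL, hyx⟩ := mem_filter.mp hy
    by_contra hyS
    exact (hlt x hxS y hyL hyS).not_ge hyx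

theorem exists_le_of_mem {m : ℕ} {L H : Finset α} (hHL : H ⊆ L) (hH : m ≤ #H) {s : α}
    (hs : s ∈ smallSet m L) : ∃ z ∈ H, s ≤ z := by
  by_contra! hlt
  obtain ⟨hsL, hcard⟩ := mem_iff.mp hs
  have hsH : s ∉ H := fun h => (hlt s h).false
  have := card_le_card (insert_subset (mem_filter.mpr ⟨hsL, le_rfl⟩)
    fun z hz => mem_filter.mpr ⟨hHL hz, (hlt z hz).le⟩ : insert s H ⊆ {y ∈ L | y ≤ s})
  rw [card_insert_of_notMem hsH] at this
  omega

theorem union_eq_of_lt {m : ℕ} {B X H : Finset α} (hHB : H ⊆ B) (hH : m ≤ #H)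
    (hX : ∀ y ∈ X, y ∉ B → ∀ z ∈ H, z < y) : smallSet m (B ∪ X) = smallSet m B := by
  refine eq_of_forall_lt ((subset m B).trans subset_union_left) ?_ fun s hs y hy hyS => ?_
  · rw [card_eq]
    exact min_eq_left (hH.trans (card_le_card hHB))
  · by_cases hyB : y ∈ B
    · exact lt_of_notMem hs hyB hyS
    · obtain ⟨z, hzH, hsz⟩ := exists_le_of_mem hHB hH hs
      exact hsz.trans_lt (hX y ((mem_union.mp hy).resolve_left hyB) hyB z hzH)

end smallSet

end

theorem small_half_independent_of_A_general {α : Type*} [LinearOrder α] (h : ℕ)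
    (LA LB : Finset α)
    (hcard : LA.card + LB.card = 2 * h + 1)
    (aA aB : α)
    (hHB : smallSet h (LA ∪ LB) ⊆ LB) :
    smallSet h ((LA \ {aA}) ∪ LB ∪ {aB}) = smallSet h (LB ∪ {aB}) := by
  set H := smallSet h (LA ∪ LB)
  have hH : h ≤ H.card := by
    have := Finset.card_le_card (Finset.subset_union_left : LA ⊆ LA ∪ LB)
    have := Finset.card_le_card (Finset.subset_union_right : LB ⊆ LA ∪ LB)
    rw [smallSet.card_eq]
    omega
  have hHB' : H ⊆ LB ∪ {aB} := hHB.trans Finset.subset_union_left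
  rw [Finset.union_assoc, Finset.union_comm]
  refine smallSet.union_eq_of_lt hHB' hH fun y hy hyB z hzH => ?_
  have hyU : y ∈ LA ∪ LB := Finset.mem_union_left _ (Finset.mem_sdiff.mp hy).1
  exact smallSet.lt_of_notMem hzH hyU fun hyH => hyB (hHB' hyH)

/-- Invariant setting: `L_A, L_B` disjoint with `|L_A| + |L_B| = 2h+1`,
`S_A ⊆ L_A`, `S_B ⊆ L_B`, `S_A ∪ S_B = H_h(L_A ∪ L_B)`, `a_A ∈ L_A`, `a_B ∉ L_A ∪ L_B`.
Assume additionally `H_h(L_A ∪ L_B) ⊆ L_B` (i.e. `S_A = ∅` and `S_B = H_h(L_A ∪ L_B)`).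
Then the `h` smallest elements of the new window `L' = (L_A \ {a_A}) ∪ L_B ∪ {a_B}` do not
depend on the `A` side: `H_h(L') = H_h(L_B ∪ {a_B})`. -/
theorem small_half_independent_of_A {α : Type*} [LinearOrder α] (h : ℕ)
    (LA LB SA SB : Finset α) (hdisj : Disjoint LA LB)
    (hcard : LA.card + LB.card = 2 * h + 1)
    (hSA : SA ⊆ LA) (hSB : SB ⊆ LB)
    (hinv : SA ∪ SB = smallSet h (LA ∪ LB))
    (aA aB : α) (haA : aA ∈ LA) (haB : aB ∉ LA ∪ LB)
    (hHB : smallSet h (LA ∪ LB) ⊆ LB) :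
    smallSet h ((LA \ {aA}) ∪ LB ∪ {aB}) = smallSet h (LB ∪ {aB}) :=
  small_half_independent_of_A_general h LA LB hcard aA aB hHB
end

section
/- Assume the invariant setting with S_A ≠ ∅ and S_B ≠ ∅, and write p_A = max S_A and p_B = max S_B. Assume a_A < p_A and a_B < p_B (case 1 of the case analysis). Then: S'_A = S_A \ {a_A}; S'_B = (S_B \ {p_B}) ∪ {a_B}; p_B is the B-side peek, i.e. p_B = min((L_B ∪ {a_B}) \ S'_B), and p_B is less than every element of (L_A \ {a_A}) \ S'_A; and H_h(L') = (H_h(L_A ∪ L_B) \ {a_A}) ∪ {a_B} = S'_A ∪ S'_B ∪ {p_B}. -/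
section

variable {α : Type*} [LinearOrder α]

structure IsInitialSegment (S L : Finset α) : Prop where
  subset : S ⊆ L
  lt : ∀ ⦃x⦄, x ∈ S → ∀ ⦃y⦄, y ∈ L → y ∉ S → x < y

theorem card_smallSet {m : ℕ} {L : Finset α} (hm : m ≤ L.card) : (smallSet m L).card = m := by
  rw [smallSet, List.card_toFinset,
    ((List.take_sublist _ _).nodup (Finset.sort_nodup _ _)).dedup,
    List.length_take, Finset.length_sort]
  omega

theorem isInitialSegment_smallSet (m : ℕ) (L : Finset α) :
    IsInitialSegment (smallSet m L) L where
  subset _ hx := (Finset.mem_sort _).mp ((List.take_sublist _ _).mem (List.mem_toFinset.mp hx))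
  lt x hx y hy hy' := by
    have hsorted := (Finset.sortedLT_sort L).pairwise
    rw [← List.take_append_drop m (L.sort (· ≤ ·))] at hsorted
    have hy_drop : y ∈ (L.sort (· ≤ ·)).drop m := by
      have hy := (Finset.mem_sort (· ≤ ·)).mpr hy
      rw [← List.take_append_drop m (L.sort (· ≤ ·))] at hy
      rcases List.mem_append.mp hy with h | h
      · exact absurd (List.mem_toFinset.mpr h) hy'
      · exact h
    exact (List.pairwise_append.mp hsorted).2.2 x (List.mem_toFinset.mp hx) y hy_drop

namespace IsInitialSegment

variable {S S' L L' : Finset α} {a b x y : α}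

theorem smallSet_eq (hS : IsInitialSegment S L) {m : ℕ} (hm : S.card = m) :
    smallSet m L = S := by
  classical
  have hsort : L.sort (· ≤ ·) = S.sort (· ≤ ·) ++ (L \ S).sort (· ≤ ·) := by
    refine List.Perm.eq_of_pairwise' (r := (· ≤ ·)) (Finset.pairwise_sort _ _) ?_ ?_
    · refine List.pairwise_append.mpr ⟨Finset.pairwise_sort _ _, Finset.pairwise_sort _ _,
        fun x hx y hy => ?_⟩
      have hy := Finset.mem_sdiff.mp ((Finset.mem_sort _).mp hy)
      exact (hS.lt ((Finset.mem_sort _).mp hx) hy.1 hy.2).le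
    · rw [← Multiset.coe_eq_coe, ← Multiset.coe_add, Finset.sort_eq, Finset.sort_eq,
        Finset.sort_eq, Finset.sdiff_val, add_tsub_cancel_of_le (Finset.val_le_iff.mpr hS.subset)]
  rw [smallSet, hsort, ← hm, ← Finset.length_sort (· ≤ ·), List.take_left,
    Finset.sort_toFinset]

theorem mem_of_lt (hS : IsInitialSegment S L) (hy : y ∈ L) (hx : x ∈ S) (hyx : y < x) :
    y ∈ S :=
  by_contra fun hyS => (hS.lt hx hy hyS).not_gt hyx

theorem of_union_left (hS : IsInitialSegment (S ∪ S') (L ∪ L')) (hSL : S ⊆ L)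
    (hSL' : S' ⊆ L') (hL : Disjoint L L') : IsInitialSegment S L where
  subset := hSL
  lt x hx y hy hyS := hS.lt (Finset.mem_union_left _ hx) (Finset.mem_union_left _ hy) <| by
    simpa [hyS] using fun hyS' => Finset.disjoint_left.mp hL hy (hSL' hyS')

theorem sdiff (hS : IsInitialSegment S L) (M : Finset α) : IsInitialSegment (S \ M) (L \ M) where
  subset := Finset.sdiff_subset_sdiff hS.subset le_rfl
  lt x hx y hy hyS := by
    simp only [Finset.mem_sdiff] at hx hy hyS
    exact hS.lt hx.1 hy.1 fun h => hyS ⟨h, hy.2⟩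

theorem insert_of_lt (hS : IsInitialSegment S L) (ha : ∀ y ∈ L, y ∉ S → a < y) :
    IsInitialSegment (insert a S) (insert a L) where
  subset := Finset.insert_subset_insert a hS.subset
  lt x hx y hy hyS := by
    simp only [Finset.mem_insert, not_or] at hx hy hyS
    have hyL := hy.resolve_left hyS.1
    rcases hx with rfl | hx
    · exact ha y hyL hyS.2
    · exact hS.lt hx hyL hyS.2

theorem max'_le_of_notMem_erase (hS : IsInitialSegment S L) (hne : S.Nonempty) (hy : y ∈ L)
    (hyS : y ∉ S.erase (S.max' hne)) : S.max' hne ≤ y := by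
  by_cases hy' : y ∈ S
  · exact (by simpa [hy'] using hyS : y = S.max' hne).ge
  · exact (hS.lt (S.max'_mem hne) hy hy').le

theorem insert_erase_max' (hS : IsInitialSegment S L) (hne : S.Nonempty)
    (ha : a < S.max' hne) : IsInitialSegment (insert a (S.erase (S.max' hne))) (insert a L) := by
  refine IsInitialSegment.insert_of_lt ⟨(Finset.erase_subset _ _).trans hS.subset, ?_⟩ ?_
  · exact fun x hx y hy hyS =>
      (S.lt_max'_of_mem_erase_max' hne hx).trans_le (hS.max'_le_of_notMem_erase hne hy hyS)
  · exact fun y hy hyS => ha.trans_le (hS.max'_le_of_notMem_erase hne hy hyS)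

theorem smallSet_card_sub_one_sdiff (hS : IsInitialSegment S L) (ha : a ∈ S) :
    smallSet (S.card - 1) (L \ {a}) = S \ {a} :=
  (hS.sdiff {a}).smallSet_eq (by rw [Finset.sdiff_singleton_eq_erase, Finset.card_erase_of_mem ha])

theorem smallSet_card_sdiff_union_singleton (hS : IsInitialSegment S L) (ha : a ∈ S)
    (hbL : b ∉ L) (hb : ∀ y ∈ L, y ∉ S → b < y) :
    smallSet S.card ((L \ {a}) ∪ {b}) = (S \ {a}) ∪ {b} := by
  simp only [Finset.union_singleton]
  refine ((hS.sdiff {a}).insert_of_lt fun y hy hyS => ?_).smallSet_eq ?_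
  · obtain ⟨hyL, hya⟩ := Finset.mem_sdiff.mp hy
    exact hb y hyL fun hyS' => hyS (Finset.mem_sdiff.mpr ⟨hyS', hya⟩)
  rw [Finset.card_insert_of_notMem fun h => hbL (hS.subset (Finset.mem_sdiff.mp h).1),
    Finset.sdiff_singleton_eq_erase, Finset.card_erase_of_mem ha]
  have := Finset.card_pos.mpr ⟨a, ha⟩
  omega

theorem smallSet_card_union_singleton (hS : IsInitialSegment S L) (hne : S.Nonempty)
    (ha : a < S.max' hne) (haL : a ∉ L) :
    smallSet S.card (L ∪ {a}) = (S \ {S.max' hne}) ∪ {a} := by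
  simp only [Finset.union_singleton, Finset.sdiff_singleton_eq_erase]
  refine (hS.insert_erase_max' hne ha).smallSet_eq ?_
  rw [Finset.card_insert_of_notMem fun h => haL (hS.subset (Finset.mem_of_mem_erase h)),
    Finset.card_erase_of_mem (S.max'_mem hne)]
  have := hne.card_pos
  omega

theorem min_sdiff_smallSet_card_union_singleton (hS : IsInitialSegment S L) (hne : S.Nonempty)
    (ha : a < S.max' hne) (haL : a ∉ L) :
    ((L ∪ {a}) \ smallSet S.card (L ∪ {a})).min = S.max' hne := by
  rw [hS.smallSet_card_union_singleton hne ha haL]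
  simp only [Finset.union_singleton, Finset.sdiff_singleton_eq_erase]
  refine le_antisymm (Finset.min_le ?_) (Finset.le_min fun y hy => ?_)
  · simp [hS.subset (S.max'_mem hne), ha.ne']
  · obtain ⟨hyL, hyS⟩ := Finset.mem_sdiff.mp hy
    simp only [Finset.mem_insert, not_or] at hyL hyS
    exact WithTop.coe_le_coe.mpr (hS.max'_le_of_notMem_erase hne (hyL.resolve_left hyS.1) hyS.2)

end IsInitialSegment

end

/-- case 1 of the case analysis.  Invariant setting: `L_A, L_B` disjoint
with `|L_A| + |L_B| = 2h+1`, `S_A ⊆ L_A`, `S_B ⊆ L_B`, `S_A ∪ S_B = H_h(L_A ∪ L_B)`,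
`a_A ∈ L_A`, `a_B ∉ L_A ∪ L_B`; `L' = (L_A \ {a_A}) ∪ L_B ∪ {a_B}`; updated small sets
`S'_A = H_{|S_A|-1}(L_A \ {a_A})` and `S'_B = H_{|S_B|}(L_B ∪ {a_B})`.
Assume `S_A ≠ ∅`, `S_B ≠ ∅`, `a_A < p_A = max S_A` and `a_B < p_B = max S_B`.  Then
`S'_A = S_A \ {a_A}`, `S'_B = (S_B \ {p_B}) ∪ {a_B}`, `p_B` is the B-side peek
(`p_B = min((L_B ∪ {a_B}) \ S'_B)`) and is less than every element of
`(L_A \ {a_A}) \ S'_A`, and `H_h(L') = (H_h(L_A ∪ L_B) \ {a_A}) ∪ {a_B} = S'_A ∪ S'_B ∪ {p_B}`. -/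
theorem invariant_case1 {α : Type*} [LinearOrder α] (h : ℕ)
    (LA LB SA SB : Finset α) (hdisj : Disjoint LA LB)
    (hcard : LA.card + LB.card = 2 * h + 1)
    (hSA : SA ⊆ LA) (hSB : SB ⊆ LB)
    (hinv : SA ∪ SB = smallSet h (LA ∪ LB))
    (aA aB : α) (haA : aA ∈ LA) (haB : aB ∉ LA ∪ LB)
    (hSAne : SA.Nonempty) (hSBne : SB.Nonempty)
    (h1 : aA < SA.max' hSAne) (h2 : aB < SB.max' hSBne) :
    smallSet (SA.card - 1) (LA \ {aA}) = SA \ {aA} ∧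
    smallSet SB.card (LB ∪ {aB}) = (SB \ {SB.max' hSBne}) ∪ {aB} ∧
    ((LB ∪ {aB}) \ smallSet SB.card (LB ∪ {aB})).min = (SB.max' hSBne : WithTop α) ∧
    (∀ x ∈ (LA \ {aA}) \ smallSet (SA.card - 1) (LA \ {aA}), SB.max' hSBne < x) ∧
    smallSet h ((LA \ {aA}) ∪ LB ∪ {aB}) = (smallSet h (LA ∪ LB) \ {aA}) ∪ {aB} ∧
    smallSet h ((LA \ {aA}) ∪ LB ∪ {aB}) =
      smallSet (SA.card - 1) (LA \ {aA}) ∪ smallSet SB.card (LB ∪ {aB}) ∪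
        {SB.max' hSBne} := by
  classical
  set pB := SB.max' hSBne
  have hpB_SB : pB ∈ SB := SB.max'_mem hSBne
  have hT : IsInitialSegment (SA ∪ SB) (LA ∪ LB) := hinv ▸ isInitialSegment_smallSet h _
  have hA : IsInitialSegment SA LA := hT.of_union_left hSA hSB hdisj
  have hB : IsInitialSegment SB LB := by
    rw [Finset.union_comm SA, Finset.union_comm LA] at hT
    exact hT.of_union_left hSB hSA hdisj.symm
  have hpB_lt : ∀ y ∈ LA ∪ LB, y ∉ SA ∪ SB → pB < y :=
    fun y hy hyT => hT.lt (Finset.mem_union_right _ hpB_SB) hy hyT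
  have haA_SA : aA ∈ SA := hA.mem_of_lt haA (SA.max'_mem hSAne) h1
  have haA_LB : aA ∉ LB := Finset.disjoint_left.mp hdisj haA
  have hT_card : (SA ∪ SB).card = h :=
    hinv ▸ card_smallSet (by rw [Finset.card_union_of_disjoint hdisj]; omega)
  have haB_LB : aB ∉ LB := (haB <| Finset.mem_union_right _ ·)
  have c1 := hA.smallSet_card_sub_one_sdiff haA_SA
  have c2 := hB.smallSet_card_union_singleton hSBne h2 haB_LB
  have c5 : smallSet h ((LA \ {aA}) ∪ LB ∪ {aB}) = ((SA ∪ SB) \ {aA}) ∪ {aB} := by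
    rw [← Finset.erase_eq_of_notMem haA_LB, ← Finset.sdiff_singleton_eq_erase,
      ← Finset.union_sdiff_distrib, ← hT_card]
    exact hT.smallSet_card_sdiff_union_singleton (Finset.mem_union_left _ haA_SA) haB
      fun y hy hyT => h2.trans (hpB_lt y hy hyT)
  refine ⟨c1, c2, hB.min_sdiff_smallSet_card_union_singleton hSBne h2 haB_LB, ?_,
    c5.trans (by rw [hinv]), ?_⟩
  · rw [c1, sdiff_sdiff_sdiff_cancel_right (Finset.singleton_subset_iff.mpr haA_SA)]
    intro x hx
    obtain ⟨hxA, hxSA⟩ := Finset.mem_sdiff.mp hx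
    refine hpB_lt x (Finset.mem_union_left _ hxA) ?_
    rw [Finset.mem_union, not_or]
    exact ⟨hxSA, fun hxSB => Finset.disjoint_left.mp hdisj hxA (hSB hxSB)⟩
  · rw [c5, c1, c2]
    ext z
    simp only [Finset.mem_union, Finset.mem_sdiff, Finset.mem_singleton]
    grind
end

section
/- (Main invariant lemma.) Assume the invariant setting with S_A ≠ ∅. Let S'_A = H_{|S_A|−1}(L_A \ {a_A}) and S'_B = H_{|S_B|}(L_B ∪ {a_B}). Then |S'_A| + |S'_B| = h − 1, and performing one advance step restores the invariant: H_h(L') = S'_A ∪ S'_B ∪ {min(L' \ (S'_A ∪ S'_B))}. In particular, S'_A ⊆ H_h(L') and S'_B ⊆ H_h(L'). -/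
open Finset

section SmallSet

variable {α : Type*} [LinearOrder α] {m n : ℕ} {L S : Finset α} {x y : α}

lemma smallSet_subset : smallSet m L ⊆ L := by
  intro x hx
  rw [smallSet, List.mem_toFinset] at hx
  exact (mem_sort _).mp (List.take_subset _ _ hx)

lemma card_smallSet_s15 : #(smallSet m L) = min m #L := by
  rw [smallSet, List.toFinset_card_of_nodup ((List.take_sublist m _).nodup (sort_nodup L _)),
    List.length_take, length_sort]

lemma card_smallSet_of_le (hm : m ≤ #L) : #(smallSet m L) = m := by
  rw [card_smallSet_s15, min_eq_left hm]

lemma lt_of_mem_smallSet_of_notMem (hx : x ∈ smallSet m L) (hy : y ∈ L)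
    (hy' : y ∉ smallSet m L) : x < y := by
  rw [smallSet, List.mem_toFinset] at hx hy'
  have hy : y ∈ (L.sort (· ≤ ·)).drop m := by
    have hmem : y ∈ L.sort (· ≤ ·) := (mem_sort _).mpr hy
    rw [← List.take_append_drop m (L.sort (· ≤ ·)), List.mem_append] at hmem
    tauto
  have hsorted : ((L.sort (· ≤ ·)).take m ++ (L.sort (· ≤ ·)).drop m).Pairwise (· < ·) := by
    rw [List.take_append_drop]
    exact (sortedLT_sort L).pairwise
  exact (List.pairwise_append.mp hsorted).2.2 x hx y hy

lemma mem_smallSet_of_lt (hx : x ∈ smallSet m L) (hy : y ∈ L) (hyx : y < x) :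
    y ∈ smallSet m L := by
  by_contra hy'
  exact (lt_of_mem_smallSet_of_notMem hx hy hy').not_gt hyx

lemma mem_smallSet_iff : x ∈ smallSet m L ↔ x ∈ L ∧ #{y ∈ L | y < x} < m := by
  constructor
  · intro hx
    have hpred : {y ∈ L | y < x} ⊆ (smallSet m L).erase x := fun y hy => by
      rw [mem_filter] at hy
      exact mem_erase.mpr ⟨hy.2.ne, mem_smallSet_of_lt hx hy.1 hy.2⟩
    refine ⟨smallSet_subset hx, ?_⟩
    calc #{y ∈ L | y < x} ≤ #((smallSet m L).erase x) := card_le_card hpred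
      _ < #(smallSet m L) := card_erase_lt_of_mem hx
      _ ≤ m := card_smallSet_s15.trans_le (min_le_left _ _)
  · rintro ⟨hxL, hlt⟩
    by_contra hx
    have hsub : smallSet m L ⊆ {y ∈ L | y < x} := fun y hy =>
      mem_filter.mpr ⟨smallSet_subset hy, lt_of_mem_smallSet_of_notMem hy hxL hx⟩
    have hcard : #(smallSet m L) < m := (card_le_card hsub).trans_lt hlt
    rw [card_smallSet_s15] at hcard
    have hall : smallSet m L = L :=
      eq_of_subset_of_card_le smallSet_subset (by rw [card_smallSet_s15]; omega)
    rw [hall] at hx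
    exact hx hxL

lemma exists_smallSet_eq_union_min' (hS : S ⊆ smallSet n L) (hcard : #S + 1 = n)
    (hn : n ≤ #L) : ∃ hne : (L \ S).Nonempty, smallSet n L = S ∪ {(L \ S).min' hne} := by
  obtain ⟨z, hz⟩ : ∃ z, smallSet n L \ S = {z} := by
    rw [← card_eq_one, card_sdiff_of_subset hS, card_smallSet_of_le hn]
    omega
  have hzH : z ∈ smallSet n L ∧ z ∉ S := mem_sdiff.mp (hz ▸ mem_singleton_self z)
  have hzmem : z ∈ L \ S := mem_sdiff.mpr ⟨smallSet_subset hzH.1, hzH.2⟩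
  have hzmin : (L \ S).min' ⟨z, hzmem⟩ = z := by
    refine le_antisymm (min'_le _ _ hzmem) (le_min' _ _ _ fun y hy => ?_)
    rw [mem_sdiff] at hy
    by_cases hyz : y = z
    · exact hyz.ge
    · have hyH : y ∉ smallSet n L := fun hyH =>
        hyz (mem_singleton.mp (hz ▸ mem_sdiff.mpr ⟨hyH, hy.2⟩))
      exact (lt_of_mem_smallSet_of_notMem hzH.1 hy.1 hyH).le
  exact ⟨⟨z, hzmem⟩, by rw [hzmin, ← hz, union_sdiff_of_subset hS]⟩

end SmallSet

section Invariant

variable {α : Type*} [LinearOrder α] {h : ℕ} {LA LB SA SB : Finset α} {aA aB x : α}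

lemma card_add_card_eq_card_smallSet (hdisj : Disjoint LA LB) (hSA : SA ⊆ LA) (hSB : SB ⊆ LB)
    (hinv : SA ∪ SB = smallSet h (LA ∪ LB)) : #SA + #SB = #(smallSet h (LA ∪ LB)) := by
  rw [← hinv, card_union_of_disjoint (hdisj.mono hSA hSB)]

lemma card_add_card_le (hdisj : Disjoint LA LB) (hSA : SA ⊆ LA) (hSB : SB ⊆ LB)
    (hinv : SA ∪ SB = smallSet h (LA ∪ LB)) : #SA + #SB ≤ h :=
  (card_add_card_eq_card_smallSet hdisj hSA hSB hinv).trans_le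
    (card_smallSet_s15.trans_le (min_le_left _ _))

lemma filter_lt_subset_right (hdisj : Disjoint LA LB) (hSA : SA ⊆ LA)
    (hinv : SA ∪ SB = smallSet h (LA ∪ LB)) (hx : x ∈ SA ∪ SB) :
    {y ∈ LB | y < x} ⊆ SB := fun y hy => by
  rw [mem_filter] at hy
  have hyH : y ∈ SA ∪ SB := hinv ▸ mem_smallSet_of_lt (hinv ▸ hx) (mem_union_right _ hy.1) hy.2
  exact (mem_union.mp hyH).resolve_left fun hyA => disjoint_left.mp hdisj (hSA hyA) hy.1

lemma smallSet_sdiff_singleton_subset (hdisj : Disjoint LA LB) (hSA : SA ⊆ LA) (hSB : SB ⊆ LB)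
    (hinv : SA ∪ SB = smallSet h (LA ∪ LB)) :
    smallSet (#SA - 1) (LA \ {aA}) ⊆ smallSet h ((LA \ {aA}) ∪ LB ∪ {aB}) := by
  intro x hx
  obtain ⟨hxA, hpred⟩ := mem_smallSet_iff.mp hx
  have hxH : x ∈ SA ∪ SB := by
    by_contra hxH
    have hSA_lt : SA ⊆ insert aA {y ∈ LA \ {aA} | y < x} := fun z hz => by
      have hzx : z < x := lt_of_mem_smallSet_of_notMem (hinv ▸ mem_union_left _ hz)
        (mem_union_left _ (mem_sdiff.mp hxA).1) (hinv ▸ hxH)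
      by_cases hza : z = aA
      · exact hza ▸ mem_insert_self _ _
      · exact mem_insert_of_mem (mem_filter.mpr ⟨mem_sdiff.mpr ⟨hSA hz, by simpa⟩, hzx⟩)
    have := (card_le_card hSA_lt).trans (card_insert_le _ _)
    omega
  have hsub : {y ∈ (LA \ {aA}) ∪ LB ∪ {aB} | y < x} ⊆
      {y ∈ LA \ {aA} | y < x} ∪ SB ∪ {aB} := by
    rw [filter_union, filter_union]
    exact union_subset_union (union_subset_union_right
      (filter_lt_subset_right hdisj hSA hinv hxH)) (filter_subset _ _)
  have hle := card_add_card_le hdisj hSA hSB hinv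
  have hcard := (card_le_card hsub).trans (card_union_le _ _)
  have hcardA := card_union_le {y ∈ LA \ {aA} | y < x} SB
  rw [card_singleton] at hcard
  exact mem_smallSet_iff.mpr ⟨mem_union_left _ (mem_union_left _ hxA), by omega⟩

lemma smallSet_union_singleton_subset (hdisj : Disjoint LA LB) (hSA : SA ⊆ LA) (hSB : SB ⊆ LB)
    (hinv : SA ∪ SB = smallSet h (LA ∪ LB)) :
    smallSet #SB (LB ∪ {aB}) ⊆ smallSet h ((LA \ {aA}) ∪ LB ∪ {aB}) := by
  intro x hx
  obtain ⟨hxB, hpred⟩ := mem_smallSet_iff.mp hx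
  have hA_lt : {y ∈ LA | y < x} ⊆ SA := by
    intro a ha
    rw [mem_filter] at ha
    by_contra haS
    have haH : a ∉ smallSet h (LA ∪ LB) := hinv ▸ fun haH =>
      (mem_union.mp haH).elim haS fun haB => disjoint_left.mp hdisj ha.1 (hSB haB)
    have hSB_lt : SB ⊆ {y ∈ LB ∪ {aB} | y < x} := fun z hz => mem_filter.mpr
      ⟨mem_union_left _ (hSB hz), (lt_of_mem_smallSet_of_notMem
        (hinv ▸ mem_union_right _ hz) (mem_union_left _ ha.1) haH).trans ha.2⟩
    exact (card_le_card hSB_lt).not_gt hpred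
  have hsub : {y ∈ (LA \ {aA}) ∪ LB ∪ {aB} | y < x} ⊆ SA ∪ {y ∈ LB ∪ {aB} | y < x} := by
    rw [union_assoc, filter_union]
    exact union_subset_union
      ((filter_subset_filter _ sdiff_subset).trans hA_lt) subset_rfl
  have hle := card_add_card_le hdisj hSA hSB hinv
  have hcard := (card_le_card hsub).trans (card_union_le _ _)
  refine mem_smallSet_iff.mpr ⟨?_, by omega⟩
  rw [union_assoc]
  exact mem_union_right _ hxB

end Invariant

/-- main invariant lemma.  Invariant setting: `L_A, L_B` disjoint with
`|L_A| + |L_B| = 2h+1`, `S_A ⊆ L_A`, `S_B ⊆ L_B`, `S_A ∪ S_B = H_h(L_A ∪ L_B)`,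
`a_A ∈ L_A`, `a_B ∉ L_A ∪ L_B`, and `S_A ≠ ∅`.  Let `L' = (L_A \ {a_A}) ∪ L_B ∪ {a_B}`,
`S'_A = H_{|S_A|-1}(L_A \ {a_A})` and `S'_B = H_{|S_B|}(L_B ∪ {a_B})`.  Then
`|S'_A| + |S'_B| = h - 1`, and one advance step restores the invariant:
`L' \ (S'_A ∪ S'_B)` is nonempty and
`H_h(L') = S'_A ∪ S'_B ∪ {min(L' \ (S'_A ∪ S'_B))}`.  In particular `S'_A ⊆ H_h(L')`
and `S'_B ⊆ H_h(L')`. -/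
theorem invariant_main_lemma {α : Type*} [LinearOrder α] (h : ℕ)
    (LA LB SA SB : Finset α) (hdisj : Disjoint LA LB)
    (hcard : LA.card + LB.card = 2 * h + 1)
    (hSA : SA ⊆ LA) (hSB : SB ⊆ LB)
    (hinv : SA ∪ SB = smallSet h (LA ∪ LB))
    (aA aB : α) (haA : aA ∈ LA) (haB : aB ∉ LA ∪ LB)
    (hSAne : SA.Nonempty) :
    (smallSet (SA.card - 1) (LA \ {aA})).card +
      (smallSet SB.card (LB ∪ {aB})).card = h - 1 ∧
    (∃ hne : (((LA \ {aA}) ∪ LB ∪ {aB}) \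
        (smallSet (SA.card - 1) (LA \ {aA}) ∪ smallSet SB.card (LB ∪ {aB}))).Nonempty,
      smallSet h ((LA \ {aA}) ∪ LB ∪ {aB}) =
        smallSet (SA.card - 1) (LA \ {aA}) ∪ smallSet SB.card (LB ∪ {aB}) ∪
          {(((LA \ {aA}) ∪ LB ∪ {aB}) \
              (smallSet (SA.card - 1) (LA \ {aA}) ∪
                smallSet SB.card (LB ∪ {aB}))).min' hne}) ∧
    smallSet (SA.card - 1) (LA \ {aA}) ⊆ smallSet h ((LA \ {aA}) ∪ LB ∪ {aB}) ∧
    smallSet SB.card (LB ∪ {aB}) ⊆ smallSet h ((LA \ {aA}) ∪ LB ∪ {aB}) := by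
  rw [mem_union, not_or] at haB
  have hst : #SA + #SB = h := by
    rw [card_add_card_eq_card_smallSet hdisj hSA hSB hinv,
      card_smallSet_of_le (by rw [card_union_of_disjoint hdisj]; omega)]
  have hpos : 0 < #SA := hSAne.card_pos
  have hcardA : #(LA \ {aA}) = #LA - 1 := by
    rw [card_sdiff_of_subset (singleton_subset_iff.mpr haA), card_singleton]
  have hcardB : #(LB ∪ {aB}) = #LB + 1 := by
    rw [card_union_of_disjoint (disjoint_singleton_right.mpr haB.2), card_singleton]
  have hA : #(smallSet (#SA - 1) (LA \ {aA})) = #SA - 1 :=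
    card_smallSet_of_le (by have := card_le_card hSA; omega)
  have hB : #(smallSet #SB (LB ∪ {aB})) = #SB :=
    card_smallSet_of_le (by have := card_le_card hSB; omega)
  have hdisjB : Disjoint LA (LB ∪ {aB}) :=
    disjoint_union_right.mpr ⟨hdisj, disjoint_singleton_right.mpr haB.1⟩
  have hdisj' : Disjoint (smallSet (#SA - 1) (LA \ {aA})) (smallSet #SB (LB ∪ {aB})) :=
    hdisjB.mono (smallSet_subset.trans sdiff_subset) smallSet_subset
  have hcardL' : #((LA \ {aA}) ∪ LB ∪ {aB}) = 2 * h + 1 := by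
    rw [union_assoc, card_union_of_disjoint (hdisjB.mono_left sdiff_subset), hcardA, hcardB]
    have := card_pos.mpr ⟨aA, haA⟩
    omega
  have hsubA := smallSet_sdiff_singleton_subset (aA := aA) (aB := aB) hdisj hSA hSB hinv
  have hsubB := smallSet_union_singleton_subset (aA := aA) (aB := aB) hdisj hSA hSB hinv
  refine ⟨by omega, exists_smallSet_eq_union_min' (union_subset hsubA hsubB) ?_ (by omega),
    hsubA, hsubB⟩
  rw [card_union_of_disjoint hdisj']
  omega
end

section
/- Let α be a linear order, L a finset over α, s a natural number with 0 < s ≤ |L|, and a ∈ L. Then the s−1 smallest elements of L \ {a} are given by: H_{s−1}(L \ {a}) = H_s(L) \ {a} if a ∈ H_s(L), and H_{s−1}(L \ {a}) = H_s(L) \ {max H_s(L)} if a ∉ H_s(L). -/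
namespace List

variable {α : Type*}

section DecidableEq

variable [DecidableEq α] {l : List α} {a : α} {s : ℕ}

theorem take_pred_erase_of_mem_take (h : a ∈ l.take s) :
    (l.erase a).take (s - 1) = (l.take s).erase a := by
  obtain ⟨p, r, rfl, hp⟩ := eq_append_cons_of_mem (mem_of_mem_take h)
  have hps : p.length < s := by
    by_contra! hle
    rw [take_append_of_le_length hle] at h
    exact hp (mem_of_mem_take h)
  obtain ⟨k, rfl⟩ : ∃ k, s = p.length + (k + 1) := ⟨s - p.length - 1, by omega⟩
  simp [erase_append_right _ hp, take_append, take_of_length_le]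

theorem take_erase_of_notMem_take (h : a ∉ l.take s) {n : ℕ} (hn : n ≤ s) :
    (l.erase a).take n = l.take n := by
  have hprefix : (l.erase a).take s = l.take s := by
    rcases le_or_gt s l.length with hs | hs
    · conv_lhs => rw [← take_append_drop s l, erase_append_right _ h]
      rw [take_append_of_le_length (by simp [hs]), take_take, min_self]
    · rw [take_of_length_le hs.le] at h
      rw [erase_of_not_mem h]
  rw [← min_eq_left hn, ← take_take, hprefix, take_take]

theorem Nodup.toFinset_erase (hl : l.Nodup) (a : α) :
    (l.erase a).toFinset = l.toFinset.erase a := by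
  ext x
  simp [hl.mem_erase_iff]

theorem Nodup.toFinset_dropLast (hl : l.Nodup) (hne : l ≠ []) :
    l.dropLast.toFinset = l.toFinset.erase (l.getLast hne) := by
  have hsplit := dropLast_append_getLast hne
  have hlast : l.getLast hne ∉ l.dropLast := by
    rw [← hsplit, nodup_append] at hl
    exact fun h => hl.2.2 _ h _ (mem_singleton_self _) rfl
  calc l.dropLast.toFinset
      = (insert (l.getLast hne) l.dropLast.toFinset).erase (l.getLast hne) :=
        (Finset.erase_insert (mem_toFinset.not.mpr hlast)).symm
    _ = l.toFinset.erase (l.getLast hne) := by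
        rw [← toFinset_cons, ← toFinset_eq_of_perm _ _ (perm_append_singleton _ _), hsplit]

end DecidableEq

theorem Pairwise.max'_toFinset [LinearOrder α] {l : List α} (hl : l.Pairwise (· ≤ ·))
    (hne : l.toFinset.Nonempty) :
    l.toFinset.max' hne = l.getLast ((toFinset_nonempty_iff l).mp hne) :=
  le_antisymm (Finset.max'_le _ _ _ fun _ hy => hl.rel_getLast (mem_toFinset.mp hy))
    (Finset.le_max' _ _ (mem_toFinset.mpr (getLast_mem _)))

end List

theorem Finset.sort_erase {α : Type*} [LinearOrder α] (L : Finset α) (a : α) :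
    (L.erase a).sort (· ≤ ·) = (L.sort (· ≤ ·)).erase a := by
  have hnd := L.sort_nodup (· ≤ ·)
  conv_lhs => rw [← L.sort_toFinset (· ≤ ·), ← hnd.toFinset_erase]
  exact (List.toFinset_sort _ (hnd.erase a)).mpr ((L.pairwise_sort _).sublist List.erase_sublist)

section smallSet

variable {α : Type*} [LinearOrder α] {L : Finset α} {s : ℕ} {a : α}

theorem smallSet_pred_erase_of_mem (ha : a ∈ smallSet s L) :
    smallSet (s - 1) (L.erase a) = (smallSet s L).erase a := by
  unfold smallSet at ha ⊢
  rw [Finset.sort_erase, List.take_pred_erase_of_mem_take (List.mem_toFinset.mp ha),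
    ((L.sort_nodup _).sublist (List.take_sublist _ _)).toFinset_erase]

theorem smallSet_pred_erase_of_notMem (ha : a ∉ smallSet s L) :
    smallSet (s - 1) (L.erase a) = smallSet (s - 1) L := by
  unfold smallSet at ha ⊢
  rw [Finset.sort_erase, List.take_erase_of_notMem_take (List.mem_toFinset.not.mp ha) (s.sub_le 1)]

theorem smallSet_erase_max' (hs : s ≤ L.card) (hne : (smallSet s L).Nonempty) :
    (smallSet s L).erase ((smallSet s L).max' hne) = smallSet (s - 1) L := by
  unfold smallSet at hne ⊢
  have hsub := List.take_sublist s (L.sort (· ≤ ·))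
  rw [((L.pairwise_sort _).sublist hsub).max'_toFinset,
    ← ((L.sort_nodup _).sublist hsub).toFinset_dropLast]
  simp [List.dropLast_eq_take, List.take_take, hs]

end smallSet

theorem small_set_after_delete_general {α : Type*} [LinearOrder α] (L : Finset α) (s : ℕ)
    (hs : s ≤ L.card) (a : α) :
    (a ∈ smallSet s L → smallSet (s - 1) (L \ {a}) = smallSet s L \ {a}) ∧
    (a ∉ smallSet s L → ∀ hne : (smallSet s L).Nonempty,
      smallSet (s - 1) (L \ {a}) = smallSet s L \ {(smallSet s L).max' hne}) := by
  simp only [Finset.sdiff_singleton_eq_erase]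
  exact ⟨smallSet_pred_erase_of_mem, fun ha hne => by
    rw [smallSet_pred_erase_of_notMem ha, smallSet_erase_max' hs]⟩

/-- For a finset `L`, `0 < s ≤ |L|`, and `a ∈ L`, the `s-1` smallest
elements of `L \ {a}` are: `H_{s-1}(L \ {a}) = H_s(L) \ {a}` if `a ∈ H_s(L)`, and
`H_{s-1}(L \ {a}) = H_s(L) \ {max H_s(L)}` if `a ∉ H_s(L)`. -/
theorem small_set_after_delete {α : Type*} [LinearOrder α] (L : Finset α) (s : ℕ)
    (hs0 : 0 < s) (hs : s ≤ L.card) (a : α) (ha : a ∈ L) :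
    (a ∈ smallSet s L → smallSet (s - 1) (L \ {a}) = smallSet s L \ {a}) ∧
    (a ∉ smallSet s L → ∀ hne : (smallSet s L).Nonempty,
      smallSet (s - 1) (L \ {a}) = smallSet s L \ {(smallSet s L).max' hne}) :=
  small_set_after_delete_general L s hs a
end
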